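/- Let T be a finite nonempty set of homogeneous terms and D a finite set of atomic formulas of the form d|t with d ≥ 1 and t homogeneous. Let ℓ > max({||t||^+ : t ∈ T} ∪ {||t||^− : t ∈ T}) and ℓ' > max{d : d|t ∈ D}. Let ψ be any Boolean combination of atomic formulas of the forms t ⋈ c and d | t + c', where t ∈ T, d|t ∈ D, −ℓ < c < ℓ, c' ∈ ℤ, and ⋈ ∈ {=,≠,<,≤,>,≥}. Then the minimal DFA representing ⟦ψ⟧ has at most (2 + 2ℓ)^{|T|} · (ℓ')^{|D|} states. -/

import Mathlib

/-!
Reading a word letter by letter, the value of a term `t` evolves by `q ↦ ρ q + t[b]`, where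
`-(ρ - 1)‖t‖⁻ ≤ t[b] ≤ (ρ - 1)‖t‖⁺`. Hence once `q` leaves `[-ℓ, ℓ]` it never comes back, and
clamping `q` to `[-ℓ, ℓ]` loses nothing that a comparison `t ⋈ c` with `-ℓ < c < ℓ` can see; for
`d ∣ t + c'` the value of `t` modulo `d` suffices. An automaton storing these clamped values and
residues, plus an initial state, represents `⟦ψ⟧` with `(2ℓ + 1)^|T| · ∏ d + 1` states.
-/

namespace Presburger

/-- A letter of the alphabet `Σ^r`, where `Σ = {0, …, ρ-1}`. -/
abbrev Letter (ρ r : ℕ) := Fin r → Fin ρ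

/-- The natural number encoded by a word over `Σ` (most significant digit first). -/
def natVal (ρ : ℕ) (w : List ℕ) : ℕ := w.foldl (fun acc b => ρ * acc + b) 0

/-- The integer encoded by a nonempty word over `Σ` (ρ's complement,
most significant digit first); the empty word gets the junk value `0`. -/
def intVal (ρ : ℕ) : List ℕ → ℤ
  | [] => 0
  | b :: u => (natVal ρ u : ℤ) - (if b = 0 then 0 else (ρ : ℤ) ^ u.length)

/-- The tuple of natural numbers encoded track-wise by a word over `Σ^r` (as integers). -/
def natVec (ρ r : ℕ) (w : List (Letter ρ r)) : Fin r → ℤ :=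
  fun i => (natVal ρ (w.map fun b => (b i : ℕ)) : ℤ)

/-- The tuple of integers encoded track-wise by a nonempty word over `Σ^r`. -/
def intVec (ρ r : ℕ) (w : List (Letter ρ r)) : Fin r → ℤ :=
  fun i => intVal ρ (w.map fun b => (b i : ℕ))

/-- A language over `Σ^r` represents a set `U ⊆ ℤ^r` if it consists exactly of the
nonempty words encoding a member of `U`. -/
def Represents (ρ r : ℕ) (L : Language (Letter ρ r)) (U : Set (Fin r → ℤ)) : Prop :=
  ∀ w : List (Letter ρ r), w ∈ L ↔ (w ≠ [] ∧ intVec ρ r w ∈ U)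

/-- A DFA represents `U ⊆ ℤ^r` if its accepted language does. -/
def DFARepresents (ρ r : ℕ) {σ : Type*} (M : DFA (Letter ρ r) σ) (U : Set (Fin r → ℤ)) : Prop :=
  Represents ρ r M.accepts U

/-- Value of the homogeneous term with coefficients `k` at the point `a`. -/
def tval {r : ℕ} (k : Fin r → ℤ) (a : Fin r → ℤ) : ℤ := ∑ i, k i * a i

/-- A homogeneous term is `0` or has all its coefficients nonzero. -/
def Homog {r : ℕ} (k : Fin r → ℤ) : Prop := k = 0 ∨ ∀ i, k i ≠ 0

/-- `σ(b)`: componentwise `0` if the digit is `0` and `-1` otherwise. -/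
def sgnLetter {ρ r : ℕ} (b : Letter ρ r) : Fin r → ℤ :=
  fun i => if (b i : ℕ) = 0 then 0 else -1

/-- The letter `b` viewed as a tuple of integers. -/
def letterInt {ρ r : ℕ} (b : Letter ρ r) : Fin r → ℤ := fun i => ((b i : ℕ) : ℤ)

/-- `‖t‖⁺`: the sum of the positive coefficients of `t`. -/
def posNorm {r : ℕ} (k : Fin r → ℤ) : ℤ := ∑ i, max (k i) 0

/-- `‖t‖⁻`: the sum of the absolute values of the negative coefficients of `t`. -/
def negNorm {r : ℕ} (k : Fin r → ℤ) : ℤ := ∑ i, max (-k i) 0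

/-- `gcd(t)`: the gcd of the absolute values of the coefficients of `t`. -/
def gcdT {r : ℕ} (k : Fin r → ℤ) : ℕ := Finset.univ.gcd fun i => (k i).natAbs

/-- The transition function `η` of the infinite-state automaton for `t`,
restricted to the integer states: `η(q, b) = ρ·q + t[b]`. -/
def etaStep (ρ : ℕ) {r : ℕ} (k : Fin r → ℤ) (q : ℤ) (b : Letter ρ r) : ℤ :=
  ρ * q + tval k (letterInt b)

/-- The transition of `η` out of the initial state: `η(q_I, b) = t[σ(b)]`. -/
def etaInit (ρ : ℕ) {r : ℕ} (k : Fin r → ℤ) (b : Letter ρ r) : ℤ :=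
  tval k (sgnLetter b)

/-- A state `q` is small (for `t ⋈ c`) if `q < min{c, -‖t‖⁺}`. -/
def IsSmall {r : ℕ} (k : Fin r → ℤ) (c q : ℤ) : Prop := q < min c (-posNorm k)

/-- A state `q` is large (for `t ⋈ c`) if `q > max{c, ‖t‖⁻}`. -/
def IsLarge {r : ℕ} (k : Fin r → ℤ) (c q : ℤ) : Prop := max c (negNorm k) < q

/-- The six relations `=, ≠, <, ≤, >, ≥` on `ℤ`. -/
def rel6 : Set (ℤ → ℤ → Prop) :=
  {fun x y => x = y, fun x y => x ≠ y, fun x y => x < y,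
   fun x y => x ≤ y, fun x y => x > y, fun x y => x ≥ y}

/-- Clamp an integer into the state set `{m, …, n}`; yields `none` (the initial state)
only in the degenerate case `m > n`, which never occurs for small `m` and large `n`. -/
noncomputable def clampSt (m n x : ℤ) : Option ↥(Finset.Icc m n) :=
  if h : max m (min n x) ∈ Finset.Icc m n then some ⟨max m (min n x), h⟩ else none

/-- The DFA `A^{t ⋈ c}_{(m,n)}` for the (in)equation `t ⋈ c`: states are
`q_I = none` together with `{m, …, n}`, transitions clamp `η` to `[m, n]`, and the
accepting states are the integer states `q` with `q ⋈ c`. -/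
noncomputable def ineqDFA (ρ : ℕ) {r : ℕ} (k : Fin r → ℤ) (m n : ℤ) (rel : ℤ → ℤ → Prop) (c : ℤ) :
    DFA (Letter ρ r) (Option ↥(Finset.Icc m n)) where
  step q b :=
    match q with
    | none => clampSt m n (etaInit ρ k b)
    | some z => clampSt m n (etaStep ρ k z.val b)
  start := none
  accept := {q | ∃ z : ↥(Finset.Icc m n), q = some z ∧ rel z.val c}

/-- Two states of a DFA are equivalent if they accept exactly the same words. -/
def stEquiv {α : Type*} {σ : Type*} (M : DFA α σ) (p q : σ) : Prop :=
  ∀ w : List α, (M.evalFrom p w ∈ M.accept ↔ M.evalFrom q w ∈ M.accept)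

end Presburger

namespace Presburger

/-- The six relation symbols `=, ≠, <, ≤, >, ≥`. -/
inductive Rel6 : Type
  | eq | ne | lt | le | gt | ge
deriving DecidableEq

/-- Interpretation of a relation symbol. -/
def Rel6.interp : Rel6 → ℤ → ℤ → Prop
  | .eq, x, y => x = y
  | .ne, x, y => x ≠ y
  | .lt, x, y => x < y
  | .le, x, y => x ≤ y
  | .gt, x, y => x > y
  | .ge, x, y => x ≥ y

/-- Boolean combinations of atomic formulas `t ⋈ c` and `d ∣ t + c'` over
homogeneous terms in `r` variables (given by their coefficient tuples). -/
inductive BC (r : ℕ) : Type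
  | rel : (Fin r → ℤ) → Rel6 → ℤ → BC r
  | dvd : ℤ → (Fin r → ℤ) → ℤ → BC r
  | not : BC r → BC r
  | and : BC r → BC r → BC r
  | or : BC r → BC r → BC r

/-- Satisfaction of a Boolean combination at a point `a ∈ ℤ^r`. -/
def BC.sat {r : ℕ} : BC r → (Fin r → ℤ) → Prop
  | .rel k R c, a => R.interp (tval k a) c
  | .dvd d k c, a => d ∣ tval k a + c
  | .not φ, a => ¬ φ.sat a
  | .and φ ψ, a => φ.sat a ∧ ψ.sat a
  | .or φ ψ, a => φ.sat a ∨ ψ.sat a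

/-- All atoms `t ⋈ c` use a term `t ∈ T` with `-ℓ < c < ℓ`, and all atoms
`d ∣ t + c'` use a pair `(d, t) ∈ D`. -/
def BC.valid {r : ℕ} (T : Finset (Fin r → ℤ)) (D : Finset (ℤ × (Fin r → ℤ)))
    (ℓ : ℤ) : BC r → Prop
  | .rel k _ c => k ∈ T ∧ -ℓ < c ∧ c < ℓ
  | .dvd d k _ => (d, k) ∈ D
  | .not φ => φ.valid T D ℓ
  | .and φ ψ => φ.valid T D ℓ ∧ ψ.valid T D ℓ
  | .or φ ψ => φ.valid T D ℓ ∧ ψ.valid T D ℓ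

section Encoding

variable {ρ r : ℕ}

lemma natVal_append_singleton (ρ : ℕ) (u : List ℕ) (b : ℕ) :
    natVal ρ (u ++ [b]) = ρ * natVal ρ u + b := by
  simp [natVal, List.foldl_append]

lemma intVal_append_singleton (ρ : ℕ) {u : List ℕ} (hu : u ≠ []) (b : ℕ) :
    intVal ρ (u ++ [b]) = ρ * intVal ρ u + b := by
  obtain ⟨x, t, rfl⟩ := List.exists_cons_of_ne_nil hu
  simp only [List.cons_append, intVal, natVal_append_singleton, List.length_append,
    List.length_singleton]
  push_cast
  split_ifs <;> ring

lemma intVec_append_singleton {u : List (Letter ρ r)} (hu : u ≠ []) (b : Letter ρ r) :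
    intVec ρ r (u ++ [b]) = (ρ : ℤ) • intVec ρ r u + letterInt b := by
  funext i
  simp only [intVec, letterInt, List.map_append, List.map_singleton, Pi.add_apply,
    Pi.smul_apply, smul_eq_mul]
  exact intVal_append_singleton ρ (by simpa using hu) _

lemma intVec_singleton (b : Letter ρ r) : intVec ρ r [b] = sgnLetter b := by
  funext i
  simp only [intVec, sgnLetter, List.map_singleton, intVal, natVal, List.foldl_nil,
    List.length_nil, pow_zero]
  split_ifs <;> simp

end Encoding

section TermBounds

variable {r : ℕ}

lemma tval_eq_dotProduct (k a : Fin r → ℤ) : tval k a = k ⬝ᵥ a := rfl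

lemma posNorm_nonneg (k : Fin r → ℤ) : 0 ≤ posNorm k :=
  Finset.sum_nonneg fun _ _ => le_max_right _ _

lemma posNorm_neg (k : Fin r → ℤ) : posNorm (-k) = negNorm k := rfl

lemma tval_neg_left (k a : Fin r → ℤ) : tval (-k) a = -tval k a := by
  simp [tval_eq_dotProduct]

lemma tval_le_mul_posNorm (k : Fin r → ℤ) {x : Fin r → ℤ} {m : ℤ}
    (hx : ∀ i, x i ∈ Set.Icc 0 m) : tval k x ≤ m * posNorm k := by
  rw [tval, posNorm, Finset.mul_sum]
  refine Finset.sum_le_sum fun i _ => ?_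
  obtain ⟨hx₀, hxm⟩ := hx i
  rcases le_total (k i) 0 with hk | hk
  · rw [max_eq_right hk]
    nlinarith
  · rw [max_eq_left hk]
    nlinarith

lemma neg_mul_negNorm_le_tval (k : Fin r → ℤ) {x : Fin r → ℤ} {m : ℤ}
    (hx : ∀ i, x i ∈ Set.Icc 0 m) : -(m * negNorm k) ≤ tval k x := by
  have := tval_le_mul_posNorm (-k) hx
  rw [tval_neg_left, posNorm_neg] at this
  linarith

lemma letterInt_mem_Icc {ρ : ℕ} (b : Letter ρ r) (i : Fin r) :
    letterInt b i ∈ Set.Icc 0 ((ρ : ℤ) - 1) := by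
  have := (b i).isLt
  simp only [letterInt, Set.mem_Icc]
  omega

end TermBounds

section Clamping

variable {ρ r : ℕ} {ℓ : ℤ} (hℓ : -ℓ ≤ ℓ)

lemma projIcc_etaStep_projIcc (hρ : 1 ≤ ρ) {k : Fin r → ℤ} (hp : posNorm k ≤ ℓ)
    (hn : negNorm k ≤ ℓ) (v : ℤ) (b : Letter ρ r) :
    Set.projIcc (-ℓ) ℓ hℓ (etaStep ρ k (Set.projIcc (-ℓ) ℓ hℓ v) b) =
      Set.projIcc (-ℓ) ℓ hℓ (etaStep ρ k v b) := by
  have hρ' : (1 : ℤ) ≤ ρ := by exact_mod_cast hρ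
  have hup := tval_le_mul_posNorm k (letterInt_mem_Icc b)
  have hlow := neg_mul_negNorm_le_tval k (letterInt_mem_Icc b)
  unfold etaStep
  set e := tval k (letterInt b)
  rcases lt_or_ge ℓ v with hv | hv
  · have hℓe : ℓ ≤ ρ * ℓ + e := by nlinarith
    have hve : ℓ ≤ ρ * v + e := by nlinarith
    rw [Set.projIcc_of_right_le _ hv.le, Set.projIcc_of_right_le _ hℓe,
      Set.projIcc_of_right_le _ hve]
  rcases lt_or_ge v (-ℓ) with hv' | hv'
  · have hℓe : ρ * -ℓ + e ≤ -ℓ := by nlinarith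
    have hve : ρ * v + e ≤ -ℓ := by nlinarith
    rw [Set.projIcc_of_le_left _ hv'.le, Set.projIcc_of_le_left _ hℓe,
      Set.projIcc_of_le_left _ hve]
  · rw [Set.projIcc_of_mem _ ⟨hv', hv⟩]

lemma rel_iff_of_projIcc_eq {x y c : ℤ} (hc : -ℓ < c ∧ c < ℓ)
    (h : Set.projIcc (-ℓ) ℓ hℓ x = Set.projIcc (-ℓ) ℓ hℓ y) (R : Rel6) :
    R.interp x c ↔ R.interp y c := by
  have h' := congrArg Subtype.val h
  simp only [Set.coe_projIcc] at h'
  cases R <;> simp only [Rel6.interp] <;> omega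

end Clamping

lemma dvd_add_iff_of_intCast_eq {d x y : ℤ} (c : ℤ) (h : (x : ZMod d.natAbs) = y) :
    d ∣ x + c ↔ d ∣ y + c := by
  rw [ZMod.intCast_eq_intCast_iff_dvd_sub, Int.natAbs_dvd] at h
  rw [show y + c = x + c + (y - x) by ring, dvd_add_left h]

section StepDFA

variable {α β : Type*}

def stepDFA (init : α → β) (step : β → α → β) (A : Set β) : DFA α (Option β) where
  step q a := some (q.elim (init a) (step · a))
  start := none
  accept := some '' A

variable {init : α → β} {step : β → α → β} {A : Set β} (f : List α → β)
  (hinit : ∀ a, f [a] = init a) (hstep : ∀ w ≠ [], ∀ a, f (w ++ [a]) = step (f w) a)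
include hinit hstep

lemma stepDFA_eval {w : List α} (hw : w ≠ []) : (stepDFA init step A).eval w = some (f w) := by
  induction w using List.reverseRecOn with
  | nil => exact absurd rfl hw
  | append_singleton u a ih =>
    rw [DFA.eval_append_singleton]
    rcases eq_or_ne u [] with rfl | hu
    · simp [stepDFA, hinit]
    · rw [ih hu]
      simp [stepDFA, hstep u hu]

lemma mem_stepDFA_accepts {w : List α} :
    w ∈ (stepDFA init step A).accepts ↔ w ≠ [] ∧ f w ∈ A := by
  rw [DFA.mem_accepts]
  rcases eq_or_ne w [] with rfl | hw
  · simp [stepDFA]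
  · rw [stepDFA_eval f hinit hstep hw]
    simp [stepDFA, hw]

end StepDFA

section Summary

variable {r : ℕ} (T : Finset (Fin r → ℤ)) (D : Finset (ℤ × (Fin r → ℤ))) (ℓ : ℤ)

/-- What the automaton remembers about the point read so far: the value of each `t ∈ T`
clamped to `[-ℓ, ℓ]`, and the value of each `t` with `d ∣ t ∈ D` modulo `d`. -/
abbrev Summary : Type := (T → Set.Icc (-ℓ) ℓ) × ((p : D) → ZMod p.1.1.natAbs)

variable {ℓ} (hℓ : -ℓ ≤ ℓ)

def summary (a : Fin r → ℤ) : Summary T D ℓ :=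
  (fun k => Set.projIcc (-ℓ) ℓ hℓ (tval k a), fun p => (tval p.1.2 a : ZMod _))

variable {T D}

def summaryStep {ρ : ℕ} (s : Summary T D ℓ) (b : Letter ρ r) : Summary T D ℓ :=
  (fun k => Set.projIcc (-ℓ) ℓ hℓ (etaStep ρ k (s.1 k) b),
   fun p => (ρ : ZMod _) * s.2 p + (tval p.1.2 (letterInt b) : ZMod _))

lemma summary_smul_add_letterInt {ρ : ℕ} (hρ : 1 ≤ ρ)
    (hT : ∀ k ∈ T, posNorm k ≤ ℓ ∧ negNorm k ≤ ℓ) (a : Fin r → ℤ) (b : Letter ρ r) :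
    summary T D hℓ ((ρ : ℤ) • a + letterInt b) = summaryStep hℓ (summary T D hℓ a) b := by
  have htval : ∀ k, tval k ((ρ : ℤ) • a + letterInt b) = etaStep ρ k (tval k a) b := by
    intro k
    simp only [tval_eq_dotProduct, etaStep, dotProduct_add, dotProduct_smul, smul_eq_mul]
  refine Prod.ext (funext fun k => ?_) (funext fun p => ?_)
  · obtain ⟨hp, hn⟩ := hT k k.2
    simp only [summary, summaryStep, htval]
    exact (projIcc_etaStep_projIcc hℓ hρ hp hn _ b).symm
  · simp only [summary, summaryStep, htval, etaStep]
    push_cast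
    ring

lemma BC.sat_iff_of_summary_eq {ψ : BC r} (hψ : ψ.valid T D ℓ) {a a' : Fin r → ℤ}
    (h : summary T D hℓ a = summary T D hℓ a') : ψ.sat a ↔ ψ.sat a' := by
  induction ψ with
  | rel k R c =>
    exact rel_iff_of_projIcc_eq hℓ hψ.2 (congrFun (congrArg Prod.fst h) ⟨k, hψ.1⟩) R
  | dvd d k c =>
    exact dvd_add_iff_of_intCast_eq c (congrFun (congrArg Prod.snd h) ⟨(d, k), hψ⟩)
  | not φ ih => exact not_congr (ih hψ)
  | and φ χ ih₁ ih₂ => exact and_congr (ih₁ hψ.1) (ih₂ hψ.2)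
  | or φ χ ih₁ ih₂ => exact or_congr (ih₁ hψ.1) (ih₂ hψ.2)

lemma BC.summary_mem_image_iff {ψ : BC r} (hψ : ψ.valid T D ℓ) (a : Fin r → ℤ) :
    summary T D hℓ a ∈ summary T D hℓ '' {a | ψ.sat a} ↔ ψ.sat a :=
  ⟨fun ⟨_, ha', h⟩ => (BC.sat_iff_of_summary_eq hℓ hψ h).1 ha', fun h => ⟨a, h, rfl⟩⟩

variable (T D) in
def summaryDFA (ρ : ℕ) (ψ : BC r) : DFA (Letter ρ r) (Option (Summary T D ℓ)) :=
  stepDFA (fun b => summary T D hℓ (sgnLetter b)) (summaryStep hℓ)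
    (summary T D hℓ '' {a | ψ.sat a})

lemma summaryDFA_represents {ρ : ℕ} (hρ : 1 ≤ ρ)
    (hT : ∀ k ∈ T, posNorm k ≤ ℓ ∧ negNorm k ≤ ℓ) {ψ : BC r} (hψ : ψ.valid T D ℓ) :
    DFARepresents ρ r (summaryDFA T D hℓ ρ ψ) {a | ψ.sat a} := by
  intro w
  rw [summaryDFA, mem_stepDFA_accepts (fun w => summary T D hℓ (intVec ρ r w))
    (fun b => by rw [intVec_singleton])
    (fun u hu b => by rw [intVec_append_singleton hu, summary_smul_add_letterInt hℓ hρ hT])]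
  exact and_congr_right fun _ => BC.summary_mem_image_iff hℓ hψ _

lemma card_summary [∀ p : D, NeZero p.1.1.natAbs] (hℓ₀ : 0 ≤ ℓ) :
    (Fintype.card (Summary T D ℓ) : ℤ) = (2 * ℓ + 1) ^ T.card * ∏ p ∈ D, |p.1| := by
  rw [Fintype.card_prod, Fintype.card_fun, Fintype.card_pi, Fintype.card_coe]
  push_cast
  simp only [ZMod.card, Int.natCast_natAbs]
  rw [Finset.prod_coe_sort D fun p => |p.1|]
  congr 2
  convert Int.card_fintype_Icc_of_le (a := -ℓ) (b := ℓ) (by omega) using 1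
  ring

end Summary

lemma pow_mul_add_one_le {x m L : ℤ} {n : ℕ} (hx : 0 ≤ x) (hn : n ≠ 0) (hm : 0 < m)
    (hmL : m ≤ L) : x ^ n * m + 1 ≤ (x + 1) ^ n * L := by
  have hxn : 0 ≤ x ^ n := pow_nonneg hx n
  calc x ^ n * m + 1 ≤ (x ^ n + 1 ^ n) * L := by
        nlinarith [one_pow (M := ℤ) n, mul_le_mul_of_nonneg_left hmL hxn]
    _ ≤ (x + 1) ^ n * L := by
      gcongr
      · linarith
      · exact pow_add_pow_le hx zero_le_one hn

theorem stmt_10_general (ρ r : ℕ) (hρ : 2 ≤ ρ)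
    (T : Finset (Fin r → ℤ)) (hT : T.Nonempty)
    (D : Finset (ℤ × (Fin r → ℤ))) (hDhom : ∀ p ∈ D, 1 ≤ p.1 ∧ Homog p.2)
    (ℓ ℓ' : ℤ)
    (hℓ : ∀ k ∈ T, posNorm k < ℓ ∧ negNorm k < ℓ)
    (hℓ' : ∀ p ∈ D, p.1 < ℓ')
    (ψ : BC r) (hψ : ψ.valid T D ℓ) :
    ∃ (σ : Type) (_ : Fintype σ) (M : DFA (Letter ρ r) σ),
      DFARepresents ρ r M {a | ψ.sat a} ∧
      (Fintype.card σ : ℤ) ≤ (2 + 2 * ℓ) ^ T.card * ℓ' ^ D.card := by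
  obtain ⟨k₀, hk₀⟩ := hT
  have hℓ₀ : -ℓ ≤ ℓ := by linarith [posNorm_nonneg k₀, (hℓ k₀ hk₀).1]
  have hd : ∀ p : D, NeZero p.1.1.natAbs := fun p => ⟨by have := (hDhom p.1 p.2).1; omega⟩
  have hT' : ∀ k ∈ T, posNorm k ≤ ℓ ∧ negNorm k ≤ ℓ :=
    fun k hk => ⟨(hℓ k hk).1.le, (hℓ k hk).2.le⟩
  refine ⟨_, inferInstance, summaryDFA T D hℓ₀ ρ ψ,
    summaryDFA_represents hℓ₀ (by omega) hT' hψ, ?_⟩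
  have hprod : ∏ p ∈ D, |p.1| ≤ ℓ' ^ D.card := by
    rw [← Finset.prod_const]
    exact Finset.prod_le_prod (fun p _ => abs_nonneg _)
      fun p hp => by have := (hDhom p hp).1; rw [abs_of_pos (by omega)]; exact (hℓ' p hp).le
  rw [Fintype.card_option, Nat.cast_add, card_summary (by omega), Nat.cast_one,
    show 2 + 2 * ℓ = 2 * ℓ + 1 + 1 by ring]
  exact pow_mul_add_one_le (by omega) (Finset.card_ne_zero_of_mem hk₀)
    (Finset.prod_pos fun p hp => abs_pos.2 (by have := (hDhom p hp).1; omega)) hprod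

/-- Theorem `bound_qf_formula`.
For a Boolean combination `ψ` of atoms `t ⋈ c` (`t ∈ T`, `-ℓ < c < ℓ`) and
`d ∣ t + c'` (`d∣t ∈ D`), where `ℓ` exceeds all `‖t‖⁺, ‖t‖⁻` for `t ∈ T` and
`ℓ'` exceeds all moduli `d` in `D`, the minimal DFA representing `⟦ψ⟧` has at
most `(2 + 2ℓ)^{|T|} · ℓ'^{|D|}` states. -/
theorem stmt_10 (ρ r : ℕ) (hρ : 2 ≤ ρ)
    (T : Finset (Fin r → ℤ)) (hT : T.Nonempty) (hThom : ∀ k ∈ T, Homog k)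
    (D : Finset (ℤ × (Fin r → ℤ))) (hDhom : ∀ p ∈ D, 1 ≤ p.1 ∧ Homog p.2)
    (ℓ ℓ' : ℤ)
    (hℓ : ∀ k ∈ T, posNorm k < ℓ ∧ negNorm k < ℓ)
    (hℓ' : ∀ p ∈ D, p.1 < ℓ')
    (ψ : BC r) (hψ : ψ.valid T D ℓ) :
    ∃ (σ : Type) (_ : Fintype σ) (M : DFA (Letter ρ r) σ),
      DFARepresents ρ r M {a | ψ.sat a} ∧
      (Fintype.card σ : ℤ) ≤ (2 + 2 * ℓ) ^ T.card * ℓ' ^ D.card :=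
  stmt_10_general ρ r hρ T hT D hDhom ℓ ℓ' hℓ hℓ' ψ hψ

end Presburger
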